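/- arXiv:2404.06719 — 4 statements merged into one kernel-verified Lean document; each statement's English description precedes it below -/
import Mathlib

section
/- Let n ≥ 1 and let f : ℝⁿ → [0,∞) be a measurable function with ∫_{ℝⁿ} f(x) dx = 1, such that x ↦ |x|² f(x) is Lebesgue integrable and x ↦ f(x) log f(x) is Lebesgue integrable. Then −∫_{ℝⁿ} f(x) log f(x) dx ≤ (n/2) · log( (2πe/n) · ∫_{ℝⁿ} |x|² f(x) dx ). -/
/-!
Gibbs' inequality `∫ f log g ≤ ∫ f log f`, valid for any probability density `g > 0`, is applied
to the centred Gaussian density `g ∝ exp (-b |x|²)`. Since `log g` is a quadratic in `|x|`, the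
left-hand side only involves the mass and the second moment `S` of `f`, which gives
`-∫ f log f ≤ b S + (n/2) log (π / b)` for every `b > 0`; the choice `b = n / (2S)` minimises the
right-hand side and yields the stated bound.
-/

open MeasureTheory Real

lemma mul_log_sub_mul_log_le {a c : ℝ} (ha : 0 ≤ a) (hc : 0 < c) :
    a * log c - a * log a ≤ c - a := by
  rcases ha.eq_or_lt with rfl | ha
  · simpa using hc.le
  have h := log_le_sub_one_of_pos (div_pos hc ha)
  rw [log_div hc.ne' ha.ne'] at h
  calc a * log c - a * log a = a * (log c - log a) := by ring
    _ ≤ a * (c / a - 1) := by gcongr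
    _ = c - a := by field_simp

section Gibbs

variable {α : Type*} [MeasurableSpace α] {μ : Measure α} {f g : α → ℝ}

theorem integral_mul_log_le_integral_mul_log (hf_nonneg : ∀ x, 0 ≤ f x) (hg_pos : ∀ x, 0 < g x)
    (hf : Integrable f μ) (hg : Integrable g μ) (hfg : ∫ x, g x ∂μ ≤ ∫ x, f x ∂μ)
    (hflogf : Integrable (fun x ↦ f x * log (f x)) μ)
    (hflogg : Integrable (fun x ↦ f x * log (g x)) μ) :
    ∫ x, f x * log (g x) ∂μ ≤ ∫ x, f x * log (f x) ∂μ := by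
  have h : ∫ x, (f x * log (g x) - f x * log (f x)) ∂μ ≤ ∫ x, (g x - f x) ∂μ :=
    integral_mono (hflogg.sub hflogf) (hg.sub hf) fun x ↦
      mul_log_sub_mul_log_le (hf_nonneg x) (hg_pos x)
  rw [integral_sub hflogg hflogf, integral_sub hg hf] at h
  linarith

end Gibbs

lemma integral_sq_norm_mul_pos {E : Type*} [NormedAddCommGroup E] [MeasurableSpace E]
    {μ : Measure E} [NullSingletonClass μ] {f : E → ℝ} (hf_nonneg : ∀ x, 0 ≤ f x)
    (h2 : Integrable (fun x ↦ ‖x‖ ^ 2 * f x) μ) (hf : ∫ x, f x ∂μ ≠ 0) :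
    0 < ∫ x, ‖x‖ ^ 2 * f x ∂μ := by
  have hmom_nonneg : 0 ≤ fun x ↦ ‖x‖ ^ 2 * f x := fun x ↦ by have := hf_nonneg x; positivity
  refine (integral_nonneg hmom_nonneg).lt_of_ne' fun h0 ↦ hf (integral_eq_zero_of_ae ?_)
  have hmom : (fun x ↦ ‖x‖ ^ 2 * f x) =ᵐ[μ] 0 :=
    (integral_eq_zero_iff_of_nonneg hmom_nonneg h2).mp h0
  have hne : ∀ᵐ x ∂μ, x ∉ ({0} : Set E) := measure_eq_zero_iff_ae_notMem.mp (measure_singleton 0)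
  filter_upwards [hmom, hne] with x hx hx0
  have : ‖x‖ ^ 2 ≠ 0 := by simpa using hx0
  exact (mul_eq_zero.mp hx).resolve_left this

section InnerProductSpace

variable {V : Type*} [NormedAddCommGroup V] [InnerProductSpace ℝ V] [FiniteDimensional ℝ V]
  [MeasurableSpace V] [BorelSpace V]

lemma integrable_exp_neg_mul_sq_norm {b : ℝ} (hb : 0 < b) :
    Integrable (fun v : V ↦ exp (-b * ‖v‖ ^ 2)) := by
  have := (GaussianFourier.integrable_cexp_neg_mul_sq_norm_add (V := V) (b := (b : ℂ))
    (by simpa using hb) 0 0).norm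
  simpa [Complex.norm_exp, ← Complex.ofReal_pow, neg_mul] using this

theorem neg_integral_mul_log_le_gaussian {f : V → ℝ} (hf_nonneg : ∀ x, 0 ≤ f x)
    (hf_int : Integrable f) (hf_one : ∫ x, f x = 1) (h2 : Integrable (fun x ↦ ‖x‖ ^ 2 * f x))
    (hlog : Integrable (fun x ↦ f x * log (f x))) {b : ℝ} (hb : 0 < b) :
    -∫ x, f x * log (f x) ≤
      b * (∫ x, ‖x‖ ^ 2 * f x) + (Module.finrank ℝ V / 2 : ℝ) * log (π / b) := by
  set Z : ℝ := (π / b) ^ (Module.finrank ℝ V / 2 : ℝ)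
  have hZ : 0 < Z := by have := div_pos pi_pos hb; positivity
  set g : V → ℝ := fun x ↦ exp (-b * ‖x‖ ^ 2) / Z
  have hg_int : Integrable g := (integrable_exp_neg_mul_sq_norm hb).div_const Z
  have hg_one : ∫ x, g x = 1 := by
    simp only [g, integral_div, GaussianFourier.integral_rexp_neg_mul_sq_norm hb]
    exact div_self hZ.ne'
  have hlog_g : ∀ x, f x * log (g x) = -b * (‖x‖ ^ 2 * f x) - log Z * f x := fun x ↦ by
    simp only [g, log_div (exp_pos _).ne' hZ.ne', log_exp]
    ring
  have hflogg : Integrable (fun x ↦ f x * log (g x)) := by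
    simp only [hlog_g]
    exact (h2.const_mul _).sub (hf_int.const_mul _)
  have gibbs := integral_mul_log_le_integral_mul_log hf_nonneg (fun x ↦ by positivity)
    hf_int hg_int (by rw [hg_one, hf_one]) hlog hflogg
  rw [integral_congr_ae (.of_forall hlog_g), integral_sub (h2.const_mul _) (hf_int.const_mul _),
    integral_const_mul, integral_const_mul, hf_one, log_rpow (div_pos pi_pos hb)] at gibbs
  linarith

end InnerProductSpace

theorem shannon_inequality_Rn_general (n : ℕ) (hn : 1 ≤ n)
    (f : EuclideanSpace ℝ (Fin n) → ℝ)
    (hf_nonneg : ∀ x, 0 ≤ f x)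
    (hf_int : Integrable f) (hf_one : ∫ x, f x = 1)
    (h2 : Integrable (fun x => ‖x‖ ^ 2 * f x))
    (hlog : Integrable (fun x => f x * Real.log (f x))) :
    -∫ x, f x * Real.log (f x) ≤
      (n / 2 : ℝ) * Real.log ((2 * π * Real.exp 1 / n) * ∫ x, ‖x‖ ^ 2 * f x) := by
  have : NeZero n := ⟨by omega⟩
  set S := ∫ x, ‖x‖ ^ 2 * f x
  have hS : 0 < S := integral_sq_norm_mul_pos hf_nonneg h2 (by simp [hf_one])
  have hn' : (0 : ℝ) < n := by exact_mod_cast hn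
  have h := neg_integral_mul_log_le_gaussian hf_nonneg hf_int hf_one h2 hlog
    (b := n / (2 * S)) (by positivity)
  rw [finrank_euclideanSpace_fin] at h
  calc -∫ x, f x * log (f x) ≤ n / (2 * S) * S + (n / 2 : ℝ) * log (π / (n / (2 * S))) := h
    _ = (n / 2 : ℝ) * log ((2 * π * exp 1 / n) * S) := by
      have hπS : 0 < 2 * π * S / n := by positivity
      rw [show 2 * π * exp 1 / n * S = 2 * π * S / n * exp 1 by ring,
        log_mul hπS.ne' (exp_pos 1).ne', log_exp, show π / (n / (2 * S)) = 2 * π * S / n by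
          field_simp]
      field_simp
      ring

/-- **Shannon's inequality on ℝⁿ.** For a probability density `f` on `ℝⁿ` with finite
second moment and integrable entropy integrand, the entropy `-∫ f log f` is bounded by
`(n/2) log((2πe/n) ∫ |x|² f)`. -/
theorem shannon_inequality_Rn (n : ℕ) (hn : 1 ≤ n)
    (f : EuclideanSpace ℝ (Fin n) → ℝ)
    (hf_meas : Measurable f) (hf_nonneg : ∀ x, 0 ≤ f x)
    (hf_int : Integrable f) (hf_one : ∫ x, f x = 1)
    (h2 : Integrable (fun x => ‖x‖ ^ 2 * f x))
    (hlog : Integrable (fun x => f x * Real.log (f x))) :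
    -∫ x, f x * Real.log (f x) ≤
      (n / 2 : ℝ) * Real.log ((2 * π * Real.exp 1 / n) * ∫ x, ‖x‖ ^ 2 * f x) :=
  shannon_inequality_Rn_general n hn f hf_nonneg hf_int hf_one h2 hlog
end

section
/- Let n ≥ 1 and let f : ℝⁿ → [0,∞) be a measurable function with ∫_{ℝⁿ} f(x) dx = 1, such that x ↦ |x|² f(x) is Lebesgue integrable and x ↦ f(x) log f(x) is Lebesgue integrable. Define Var(f) := inf_{y ∈ ℝⁿ} ∫_{ℝⁿ} |x − y|² f(x) dx. Then −∫_{ℝⁿ} f(x) log f(x) dx ≤ (n/2) · log( (2πe/n) · Var(f) ). -/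
/-!
Gibbs' inequality `∫ f log g ≤ ∫ f log f`, applied to a Gaussian density `g`, bounds the entropy
by the cross-entropy `-∫ f log g`, which only sees the second moment of `f` about the mean of `g`.
Centring `g` at the mean of `f` (where `y ↦ ∫ ‖x - y‖² f` attains its infimum, by the parallel axis
theorem) and matching its variance to that of `f` gives the bound; the variance is positive because
a density cannot concentrate on a single point.
-/

open MeasureTheory Real
open scoped RealInnerProductSpace

lemma mul_log_sub_mul_log_le_sub {a b : ℝ} (ha : 0 ≤ a) (hb : 0 < b) :
    a * log b - a * log a ≤ b - a := by
  rcases ha.eq_or_lt with rfl | ha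
  · simpa using hb.le
  · have := log_le_sub_one_of_pos (div_pos hb ha)
    rw [log_div hb.ne' ha.ne'] at this
    calc a * log b - a * log a = a * (log b - log a) := by ring
      _ ≤ a * (b / a - 1) := by gcongr
      _ = b - a := by field_simp

theorem integral_mul_log_le_integral_mul_log_add_sub {α : Type*} [MeasurableSpace α] {μ : Measure α}
    {f g : α → ℝ} (hf_nonneg : ∀ x, 0 ≤ f x) (hg_pos : ∀ x, 0 < g x)
    (hf : Integrable f μ) (hg : Integrable g μ)
    (hfg : Integrable (fun x => f x * log (g x)) μ)
    (hff : Integrable (fun x => f x * log (f x)) μ) :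
    ∫ x, f x * log (g x) ∂μ ≤ ∫ x, f x * log (f x) ∂μ + (∫ x, g x ∂μ - ∫ x, f x ∂μ) := by
  have : ∫ x, (f x * log (g x) - f x * log (f x)) ∂μ ≤ ∫ x, (g x - f x) ∂μ :=
    integral_mono (hfg.sub hff) (hg.sub hf) fun x =>
      mul_log_sub_mul_log_le_sub (hf_nonneg x) (hg_pos x)
  rw [integral_sub hfg hff, integral_sub hg hf] at this
  linarith

lemma sq_norm_sub_mul_eq {E : Type*} [SeminormedAddCommGroup E] [InnerProductSpace ℝ E]
    (x y : E) (a : ℝ) :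
    ‖x - y‖ ^ 2 * a = ‖x‖ ^ 2 * a - 2 * ⟪y, a • x⟫ + ‖y‖ ^ 2 * a := by
  rw [norm_sub_sq_real, real_inner_smul_right, real_inner_comm]
  ring

section SecondMoment

variable {E : Type*} [NormedAddCommGroup E] [InnerProductSpace ℝ E] [FiniteDimensional ℝ E]
  [MeasurableSpace E] [BorelSpace E] {μ : Measure E} {f : E → ℝ}

lemma integrable_smul_self_of_integrable_sq_norm_mul (hf : Integrable f μ)
    (h2 : Integrable (fun x => ‖x‖ ^ 2 * f x) μ) : Integrable (fun x => f x • x) μ := by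
  refine (hf.norm.add h2.norm).mono' (hf.aestronglyMeasurable.smul aestronglyMeasurable_id)
    (.of_forall fun x => ?_)
  have : ‖x‖ ≤ 1 + ‖x‖ ^ 2 := by nlinarith [sq_nonneg (‖x‖ - 1)]
  simp only [norm_smul, norm_mul, norm_pow, norm_norm, Pi.add_apply]
  nlinarith [norm_nonneg (f x)]

lemma integrable_sq_norm_sub_mul (hf : Integrable f μ)
    (h2 : Integrable (fun x => ‖x‖ ^ 2 * f x) μ) (y : E) :
    Integrable (fun x => ‖x - y‖ ^ 2 * f x) μ := by
  have hx := integrable_smul_self_of_integrable_sq_norm_mul hf h2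
  simp_rw [sq_norm_sub_mul_eq _ y]
  exact (h2.sub ((hx.const_inner y).const_mul 2)).add (hf.const_mul _)

lemma integral_sq_norm_sub_mul (hf : Integrable f μ)
    (h2 : Integrable (fun x => ‖x‖ ^ 2 * f x) μ) (y : E) :
    ∫ x, ‖x - y‖ ^ 2 * f x ∂μ =
      ∫ x, ‖x‖ ^ 2 * f x ∂μ - 2 * ⟪y, ∫ x, f x • x ∂μ⟫ + ‖y‖ ^ 2 * ∫ x, f x ∂μ := by
  have hx := integrable_smul_self_of_integrable_sq_norm_mul hf h2
  have hcross : Integrable (fun x => 2 * ⟪y, f x • x⟫) μ := (hx.const_inner y).const_mul 2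
  have hsub : Integrable (fun x => ‖x‖ ^ 2 * f x - 2 * ⟪y, f x • x⟫) μ := h2.sub hcross
  simp_rw [sq_norm_sub_mul_eq _ y]
  rw [integral_add hsub (hf.const_mul _), integral_sub h2 hcross, integral_const_mul,
    integral_const_mul, integral_inner hx]

lemma integral_sq_norm_sub_mul_eq_add (hf : Integrable f μ)
    (h2 : Integrable (fun x => ‖x‖ ^ 2 * f x) μ) (h1 : ∫ x, f x ∂μ = 1) (y : E) :
    ∫ x, ‖x - y‖ ^ 2 * f x ∂μ =
      ∫ x, ‖x - ∫ z, f z • z ∂μ‖ ^ 2 * f x ∂μ + ‖y - ∫ z, f z • z ∂μ‖ ^ 2 := by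
  rw [integral_sq_norm_sub_mul hf h2, integral_sq_norm_sub_mul hf h2, h1, norm_sub_sq_real,
    real_inner_self_eq_norm_sq]
  ring

lemma iInf_integral_sq_norm_sub_mul (hf : Integrable f μ)
    (h2 : Integrable (fun x => ‖x‖ ^ 2 * f x) μ) (h1 : ∫ x, f x ∂μ = 1) :
    ⨅ y, ∫ x, ‖x - y‖ ^ 2 * f x ∂μ = ∫ x, ‖x - ∫ z, f z • z ∂μ‖ ^ 2 * f x ∂μ := by
  have hle : ∀ y, ∫ x, ‖x - ∫ z, f z • z ∂μ‖ ^ 2 * f x ∂μ ≤ ∫ x, ‖x - y‖ ^ 2 * f x ∂μ := by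
    intro y
    rw [integral_sq_norm_sub_mul_eq_add hf h2 h1 y]
    exact le_add_of_nonneg_right (sq_nonneg _)
  exact le_antisymm (ciInf_le ⟨_, Set.forall_mem_range.2 hle⟩ _) (le_ciInf hle)

lemma integral_sq_norm_sub_mul_pos [NullSingletonClass μ] (hf_nonneg : ∀ x, 0 ≤ f x)
    (hf : Integrable f μ) (h2 : Integrable (fun x => ‖x‖ ^ 2 * f x) μ)
    (h1 : ∫ x, f x ∂μ ≠ 0) (y : E) : 0 < ∫ x, ‖x - y‖ ^ 2 * f x ∂μ := by
  have hmoment_nonneg : 0 ≤ fun x => ‖x - y‖ ^ 2 * f x :=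
    fun x => mul_nonneg (sq_nonneg _) (hf_nonneg x)
  refine (integral_nonneg hmoment_nonneg).lt_of_ne' fun h0 => h1 ?_
  have hzero := (integral_eq_zero_iff_of_nonneg hmoment_nonneg
    (integrable_sq_norm_sub_mul hf h2 y)).1 h0
  have hne : ∀ᵐ x ∂μ, x ≠ y := by
    rw [ae_iff]
    simpa only [not_not, Set.ofPred_eq_eq_singleton] using measure_singleton y
  refine integral_eq_zero_of_ae ?_
  filter_upwards [hzero, hne] with x hx hxy
  simpa [sub_eq_zero, hxy] using hx

end SecondMoment

section Gaussian

variable {E : Type*} [NormedAddCommGroup E] [InnerProductSpace ℝ E] {c : ℝ} {m : E} {f : E → ℝ}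

/-- The Gaussian density on `E` with mean `m` and covariance `(2c)⁻¹ • id`. -/
noncomputable def isotropicGaussianPDF (c : ℝ) (m x : E) : ℝ :=
  (π / c) ^ (-(Module.finrank ℝ E : ℝ) / 2) * exp (-c * ‖x - m‖ ^ 2)

lemma isotropicGaussianPDF_pos (hc : 0 < c) (x : E) : 0 < isotropicGaussianPDF c m x := by
  unfold isotropicGaussianPDF
  have := pi_pos
  positivity

lemma log_isotropicGaussianPDF (hc : 0 < c) (x : E) :
    log (isotropicGaussianPDF c m x) =
      -(Module.finrank ℝ E / 2 : ℝ) * log (π / c) - c * ‖x - m‖ ^ 2 := by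
  have := pi_pos
  rw [isotropicGaussianPDF, log_mul (by positivity) (exp_ne_zero _), log_rpow (by positivity),
    log_exp]
  ring

lemma mul_log_isotropicGaussianPDF (hc : 0 < c) (x : E) :
    f x * log (isotropicGaussianPDF c m x) =
      -(Module.finrank ℝ E / 2 : ℝ) * log (π / c) * f x - c * (‖x - m‖ ^ 2 * f x) := by
  rw [log_isotropicGaussianPDF hc]
  ring

variable [FiniteDimensional ℝ E] [MeasurableSpace E] [BorelSpace E]

lemma integral_isotropicGaussianPDF (hc : 0 < c) : ∫ x, isotropicGaussianPDF c m x = 1 := by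
  have := pi_pos
  simp only [isotropicGaussianPDF]
  rw [integral_const_mul, integral_sub_right_eq_self (fun x => exp (-c * ‖x‖ ^ 2)) m,
    GaussianFourier.integral_rexp_neg_mul_sq_norm hc, ← rpow_add (by positivity),
    neg_div, neg_add_cancel, rpow_zero]

lemma integrable_isotropicGaussianPDF (hc : 0 < c) :
    Integrable (isotropicGaussianPDF c m) :=
  .of_integral_ne_zero (by rw [integral_isotropicGaussianPDF hc]; exact one_ne_zero)

lemma integrable_mul_log_isotropicGaussianPDF (hc : 0 < c) (hf : Integrable f)
    (h2 : Integrable (fun x => ‖x‖ ^ 2 * f x)) :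
    Integrable (fun x => f x * log (isotropicGaussianPDF c m x)) := by
  simp_rw [mul_log_isotropicGaussianPDF hc]
  exact (hf.const_mul _).sub ((integrable_sq_norm_sub_mul hf h2 m).const_mul c)

lemma integral_mul_log_isotropicGaussianPDF (hc : 0 < c) (hf : Integrable f)
    (h2 : Integrable (fun x => ‖x‖ ^ 2 * f x)) (h1 : ∫ x, f x = 1) :
    ∫ x, f x * log (isotropicGaussianPDF c m x) =
      -(Module.finrank ℝ E / 2 : ℝ) * log (π / c) - c * ∫ x, ‖x - m‖ ^ 2 * f x := by
  simp_rw [mul_log_isotropicGaussianPDF hc]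
  rw [integral_sub (hf.const_mul _) ((integrable_sq_norm_sub_mul hf h2 m).const_mul c),
    integral_const_mul, integral_const_mul, h1, mul_one]

theorem neg_integral_mul_log_le_of_isotropicGaussianPDF (hc : 0 < c) (hf_nonneg : ∀ x, 0 ≤ f x)
    (hf : Integrable f) (h2 : Integrable (fun x => ‖x‖ ^ 2 * f x)) (h1 : ∫ x, f x = 1)
    (hlog : Integrable (fun x => f x * log (f x))) (m : E) :
    -∫ x, f x * log (f x) ≤
      (Module.finrank ℝ E / 2 : ℝ) * log (π / c) + c * ∫ x, ‖x - m‖ ^ 2 * f x := by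
  have hgibbs := integral_mul_log_le_integral_mul_log_add_sub hf_nonneg
    (isotropicGaussianPDF_pos (m := m) hc) hf (integrable_isotropicGaussianPDF hc)
    (integrable_mul_log_isotropicGaussianPDF hc hf h2) hlog
  rw [integral_mul_log_isotropicGaussianPDF hc hf h2 h1, integral_isotropicGaussianPDF hc, h1]
    at hgibbs
  linarith

theorem neg_integral_mul_log_le_log_variance [Nontrivial E] (hf_nonneg : ∀ x, 0 ≤ f x)
    (hf : Integrable f) (h2 : Integrable (fun x => ‖x‖ ^ 2 * f x)) (h1 : ∫ x, f x = 1)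
    (hlog : Integrable (fun x => f x * log (f x))) (m : E)
    (hV : 0 < ∫ x, ‖x - m‖ ^ 2 * f x) :
    -∫ x, f x * log (f x) ≤ (Module.finrank ℝ E / 2 : ℝ) *
      log ((2 * π * exp 1 / Module.finrank ℝ E) * ∫ x, ‖x - m‖ ^ 2 * f x) := by
  set d : ℝ := (Module.finrank ℝ E : ℝ)
  set V := ∫ x, ‖x - m‖ ^ 2 * f x
  have hd : 0 < d := Nat.cast_pos.2 Module.finrank_pos
  -- the Gaussian whose second moment about `m` is also `V`
  have hc : 0 < d / (2 * V) := by positivity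
  have key := neg_integral_mul_log_le_of_isotropicGaussianPDF hc hf_nonneg hf h2 h1 hlog m
  have hcV : d / (2 * V) * V = d / 2 := by field_simp
  have harg : 2 * π * exp 1 / d * V = exp 1 * (π / (d / (2 * V))) := by field_simp
  rw [hcV] at key
  rw [harg, log_mul (exp_ne_zero 1) (by have := pi_pos; positivity), log_exp]
  linarith

end Gaussian

theorem shannon_inequality_variance_Rn_general (n : ℕ) (hn : 1 ≤ n)
    (f : EuclideanSpace ℝ (Fin n) → ℝ)
    (hf_nonneg : ∀ x, 0 ≤ f x)
    (hf_int : Integrable f) (hf_one : ∫ x, f x = 1)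
    (h2 : Integrable (fun x => ‖x‖ ^ 2 * f x))
    (hlog : Integrable (fun x => f x * Real.log (f x))) :
    -∫ x, f x * Real.log (f x) ≤
      (n / 2 : ℝ) * Real.log ((2 * π * Real.exp 1 / n) *
        ⨅ y : EuclideanSpace ℝ (Fin n), ∫ x, ‖x - y‖ ^ 2 * f x) := by
  have : Nonempty (Fin n) := ⟨⟨0, hn⟩⟩
  have hV := integral_sq_norm_sub_mul_pos hf_nonneg hf_int h2 (by rw [hf_one]; exact one_ne_zero)
    (∫ z, f z • z)
  rw [iInf_integral_sq_norm_sub_mul hf_int h2 hf_one]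
  simpa only [finrank_euclideanSpace_fin] using
    neg_integral_mul_log_le_log_variance hf_nonneg hf_int h2 hf_one hlog _ hV

/-- **Variance form of Shannon's inequality on ℝⁿ.** For a probability density `f` on `ℝⁿ`
with finite second moment and integrable entropy integrand, setting
`Var(f) = inf_y ∫ |x - y|² f(x) dx`, one has
`-∫ f log f ≤ (n/2) log((2πe/n) Var(f))`. -/
theorem shannon_inequality_variance_Rn (n : ℕ) (hn : 1 ≤ n)
    (f : EuclideanSpace ℝ (Fin n) → ℝ)
    (hf_meas : Measurable f) (hf_nonneg : ∀ x, 0 ≤ f x)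
    (hf_int : Integrable f) (hf_one : ∫ x, f x = 1)
    (h2 : Integrable (fun x => ‖x‖ ^ 2 * f x))
    (hlog : Integrable (fun x => f x * Real.log (f x))) :
    -∫ x, f x * Real.log (f x) ≤
      (n / 2 : ℝ) * Real.log ((2 * π * Real.exp 1 / n) *
        ⨅ y : EuclideanSpace ℝ (Fin n), ∫ x, ‖x - y‖ ^ 2 * f x) :=
  shannon_inequality_variance_Rn_general n hn f hf_nonneg hf_int hf_one h2 hlog
end

section
/- Let n ≥ 1, t > 0, and let G_t(x) := (4πt)^{−n/2} exp(−|x|²/(4t)) be the Gaussian density on ℝⁿ. Then equality holds in Shannon's inequality for G_t, namely −∫_{ℝⁿ} G_t(x) log G_t(x) dx = (n/2) · log( (2πe/n) · ∫_{ℝⁿ} |x|² G_t(x) dx ). -/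
open MeasureTheory Real Set

/-!
Since `log G_t(x) = -(n/2) log(4πt) - |x|²/(4t)` is affine in `|x|²`, the entropy of `G_t` is
determined by its mass `1` and its second moment `2nt`; both sides then equal
`(n/2) (log(4πt) + 1)`. The second moment is computed in polar coordinates, where
`Γ(s + 1) = s Γ(s)` gives `∫ |x|² e^{-b|x|²} dx = n/(2b) ∫ e^{-b|x|²} dx`.
-/

theorem integral_pow_mul_exp_neg_mul_sq {b : ℝ} (hb : 0 < b) (k : ℕ) :
    ∫ x in Ioi (0 : ℝ), x ^ k * exp (-b * x ^ 2) =
      b ^ (-((k : ℝ) + 1) / 2) * (1 / 2) * Gamma (((k : ℝ) + 1) / 2) := by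
  rw [← integral_rpow_mul_exp_neg_mul_rpow two_pos (neg_one_lt_zero.trans_le k.cast_nonneg) hb]
  refine setIntegral_congr_fun measurableSet_Ioi fun x _ => ?_
  rw [rpow_natCast, rpow_two]

theorem integral_pow_add_two_mul_exp_neg_mul_sq {b : ℝ} (hb : 0 < b) (k : ℕ) :
    ∫ x in Ioi (0 : ℝ), x ^ (k + 2) * exp (-b * x ^ 2) =
      (k + 1) / (2 * b) * ∫ x in Ioi (0 : ℝ), x ^ k * exp (-b * x ^ 2) := by
  have hGamma : Gamma (((k : ℝ) + 1) / 2 + 1) = ((k : ℝ) + 1) / 2 * Gamma (((k : ℝ) + 1) / 2) :=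
    Gamma_add_one (by positivity)
  have hpow : b ^ (-((k : ℝ) + 1) / 2 - 1) = b ^ (-((k : ℝ) + 1) / 2) / b := by
    rw [rpow_sub hb, rpow_one]
  rw [integral_pow_mul_exp_neg_mul_sq hb, integral_pow_mul_exp_neg_mul_sq hb]
  push_cast
  rw [show ((k : ℝ) + 2 + 1) / 2 = ((k : ℝ) + 1) / 2 + 1 by ring,
    show -((k : ℝ) + 2 + 1) / 2 = -((k : ℝ) + 1) / 2 - 1 by ring, hGamma, hpow]
  field_simp

variable {V : Type*} [NormedAddCommGroup V] [InnerProductSpace ℝ V]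

variable (V) in
noncomputable def heatKernel (t : ℝ) (x : V) : ℝ :=
  (4 * π * t) ^ (-(Module.finrank ℝ V : ℝ) / 2) * exp (-‖x‖ ^ 2 / (4 * t))

theorem heatKernel_eq_mul_exp (t : ℝ) (x : V) :
    heatKernel V t x =
      (4 * π * t) ^ (-(Module.finrank ℝ V : ℝ) / 2) * exp (-(4 * t)⁻¹ * ‖x‖ ^ 2) := by
  rw [heatKernel]
  ring_nf

variable [FiniteDimensional ℝ V] [MeasurableSpace V] [BorelSpace V]

theorem integral_sq_norm_mul_exp_neg_mul_sq_norm {b : ℝ} (hb : 0 < b) :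
    ∫ x : V, ‖x‖ ^ 2 * exp (-b * ‖x‖ ^ 2) =
      Module.finrank ℝ V / (2 * b) * (π / b) ^ (Module.finrank ℝ V / 2 : ℝ) := by
  rcases subsingleton_or_nontrivial V with hV | hV
  · simp [Subsingleton.elim _ (0 : V), Module.finrank_zero_of_subsingleton]
  set d := Module.finrank ℝ V
  have hd : ((d - 1 : ℕ) : ℝ) + 1 = d := by
    rw [Nat.cast_pred Module.finrank_pos]; ring
  calc ∫ x : V, ‖x‖ ^ 2 * exp (-b * ‖x‖ ^ 2)
      = d • volume.real (Metric.ball (0 : V) 1) •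
          ∫ y in Ioi (0 : ℝ), y ^ (d - 1 + 2) * exp (-b * y ^ 2) := by
        rw [integral_fun_norm_addHaar volume fun y => y ^ 2 * exp (-b * y ^ 2)]
        congr 2
        refine setIntegral_congr_fun measurableSet_Ioi fun y _ => ?_
        simp only [smul_eq_mul]; ring
    _ = d / (2 * b) * (d • volume.real (Metric.ball (0 : V) 1) •
          ∫ y in Ioi (0 : ℝ), y ^ (d - 1) • exp (-b * y ^ 2)) := by
        rw [integral_pow_add_two_mul_exp_neg_mul_sq hb, hd]
        simp only [nsmul_eq_mul, smul_eq_mul]; ring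
    _ = d / (2 * b) * (π / b) ^ (d / 2 : ℝ) := by
        rw [← integral_fun_norm_addHaar volume fun y => exp (-b * y ^ 2),
          GaussianFourier.integral_rexp_neg_mul_sq_norm hb]

theorem integrable_sq_norm_mul_exp_neg_mul_sq_norm {b : ℝ} (hb : 0 < b) :
    Integrable fun x : V => ‖x‖ ^ 2 * exp (-b * ‖x‖ ^ 2) := by
  rcases subsingleton_or_nontrivial V with hV | hV
  · simp [Subsingleton.elim _ (0 : V)]
  -- a non-integrable function would have integral `0`
  refine Integrable.of_integral_ne_zero ?_
  rw [integral_sq_norm_mul_exp_neg_mul_sq_norm hb]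
  have := Module.finrank_pos (R := ℝ) (M := V)
  positivity

variable {t : ℝ}

theorem integral_heatKernel (ht : 0 < t) : ∫ x, heatKernel V t x = 1 := by
  simp_rw [heatKernel_eq_mul_exp]
  rw [integral_const_mul, GaussianFourier.integral_rexp_neg_mul_sq_norm (by positivity),
    div_inv_eq_mul, neg_div, rpow_neg (by positivity), show π * (4 * t) = 4 * π * t by ring,
    inv_mul_cancel₀ (by positivity)]

theorem integral_sq_norm_mul_heatKernel (ht : 0 < t) :
    ∫ x, ‖x‖ ^ 2 * heatKernel V t x = 2 * Module.finrank ℝ V * t := by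
  simp_rw [heatKernel_eq_mul_exp, mul_left_comm (‖_‖ ^ 2)]
  rw [integral_const_mul, integral_sq_norm_mul_exp_neg_mul_sq_norm (by positivity),
    div_inv_eq_mul, neg_div, rpow_neg (by positivity), show π * (4 * t) = 4 * π * t by ring]
  field_simp
  ring

theorem integral_heatKernel_mul_log (ht : 0 < t) :
    ∫ x, heatKernel V t x * log (heatKernel V t x) =
      -(Module.finrank ℝ V / 2 * (log (4 * π * t) + 1)) := by
  have hlog (x : V) : log (heatKernel V t x) =
      -(Module.finrank ℝ V / 2) * log (4 * π * t) - (4 * t)⁻¹ * ‖x‖ ^ 2 := by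
    rw [heatKernel_eq_mul_exp, log_mul (by positivity) (exp_ne_zero _), log_exp,
      log_rpow (by positivity)]
    ring
  have hint : Integrable fun x => heatKernel V t x :=
    .of_integral_ne_zero (by rw [integral_heatKernel ht]; exact one_ne_zero)
  have hint₂ : Integrable fun x => ‖x‖ ^ 2 * heatKernel V t x := by
    simp_rw [heatKernel_eq_mul_exp, mul_left_comm (‖_‖ ^ 2)]
    exact (integrable_sq_norm_mul_exp_neg_mul_sq_norm (by positivity)).const_mul _
  calc ∫ x, heatKernel V t x * log (heatKernel V t x)
      = ∫ x, (-(Module.finrank ℝ V / 2) * log (4 * π * t) * heatKernel V t x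
          - (4 * t)⁻¹ * (‖x‖ ^ 2 * heatKernel V t x)) := by
        congr 1; funext x; rw [hlog]; ring
    _ = -(Module.finrank ℝ V / 2 * (log (4 * π * t) + 1)) := by
        rw [integral_sub (hint.const_mul _) (hint₂.const_mul _), integral_const_mul,
          integral_const_mul, integral_heatKernel ht, integral_sq_norm_mul_heatKernel ht]
        field_simp
        ring

theorem shannon_equality_gaussian_general (n : ℕ) (t : ℝ) (ht : 0 < t)
    (G : EuclideanSpace ℝ (Fin n) → ℝ)
    (hG : G = fun x => (4 * π * t) ^ (-(n : ℝ) / 2) * Real.exp (-‖x‖ ^ 2 / (4 * t))) :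
    -∫ x, G x * Real.log (G x) =
      (n / 2 : ℝ) * Real.log ((2 * π * Real.exp 1 / n) * ∫ x, ‖x‖ ^ 2 * G x) := by
  have hd : Module.finrank ℝ (EuclideanSpace ℝ (Fin n)) = n := finrank_euclideanSpace_fin
  have hGt : G = heatKernel _ t := by rw [hG]; unfold heatKernel; rw [hd]
  rw [hGt, integral_heatKernel_mul_log ht, integral_sq_norm_mul_heatKernel ht, hd, neg_neg]
  rcases eq_or_ne (n : ℝ) 0 with hn | hn
  · simp [hn]
  rw [show 2 * π * exp 1 / n * (2 * n * t) = 4 * π * t * exp 1 by field_simp; ring,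
    log_mul (by positivity) (exp_ne_zero 1), log_exp]

/-- **Sharpness of Shannon's inequality.** The Gaussian density
`G_t(x) = (4πt)^{-n/2} exp(-|x|²/(4t))` attains equality in Shannon's inequality. -/
theorem shannon_equality_gaussian (n : ℕ) (hn : 1 ≤ n) (t : ℝ) (ht : 0 < t)
    (G : EuclideanSpace ℝ (Fin n) → ℝ)
    (hG : G = fun x => (4 * π * t) ^ (-(n : ℝ) / 2) * Real.exp (-‖x‖ ^ 2 / (4 * t))) :
    -∫ x, G x * Real.log (G x) =
      (n / 2 : ℝ) * Real.log ((2 * π * Real.exp 1 / n) * ∫ x, ‖x‖ ^ 2 * G x) :=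
  shannon_equality_gaussian_general n t ht G hG
end

section
/- Let H := ℝ × [0,∞) be the closed upper half-plane with two-dimensional Lebesgue measure, and for t > 0 define q_t : H → ℝ by q_t(y) := (2πt)^{−1} exp(−|y|²/(4t)), where |y| is the Euclidean norm of y ∈ ℝ². Then ∫_H q_t(y) dy = 1 and ∫_H q_t(y) log q_t(y) dy = log 2 − log(4πe t). Consequently, with U(t) := exp(−(1/2) ∫_H q_t log q_t dy) = √(2πe t), one has (1/√t) ∫₀ᵗ (1/U(s)) ds = √(2/(πe)) for every t > 0. -/
/-!
The kernel is an even radial function, so its integral over the half-plane is half its integral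
over `ℝ²`, which polar coordinates turn into `π ∫₀^∞ r f(r) dr`. Since
`log q_t(y) = log K - |y|²/(4t)` with `K = (2πt)⁻¹`, mass and entropy reduce to the Gaussian
moments `∫₀^∞ r^(2n+1) e^(-br²) dr = n! / (2 b^(n+1))` for `n = 0, 1`. The last identity is
`∫₀ᵗ s^(-1/2) ds = 2√t`.
-/

open MeasureTheory Real Set
open scoped Nat

section HalfSpace

variable {E F : Type*} [NormedAddCommGroup E] [NormedSpace ℝ E] [FiniteDimensional ℝ E]
  [MeasurableSpace E] [BorelSpace E] {μ : Measure E} [μ.IsAddHaarMeasure]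
  [NormedAddCommGroup F] [NormedSpace ℝ F]

theorem setIntegral_halfSpace_of_even {ℓ : E →L[ℝ] ℝ} (hℓ : ℓ ≠ 0) {f : E → F}
    (hf : Integrable f μ) (heven : ∀ x, f (-x) = f x) :
    ∫ x in {x | 0 ≤ ℓ x}, f x ∂μ = (2 : ℝ)⁻¹ • ∫ x, f x ∂μ := by
  have hS : MeasurableSet {x | 0 ≤ ℓ x} := measurableSet_le measurable_const ℓ.measurable
  have hker : μ (LinearMap.ker (ℓ : E →ₗ[ℝ] ℝ)) = 0 :=
    Measure.addHaar_submodule μ _ fun h =>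
      hℓ (ContinuousLinearMap.coe_injective (LinearMap.ker_eq_top.mp h))
  have hpos : {x | 0 < ℓ x} =ᵐ[μ] {x | 0 ≤ ℓ x} := by
    refine ae_eq_set.mpr ⟨?_, ?_⟩
    · exact measure_mono_null (fun x ⟨(hx : 0 < ℓ x), hx'⟩ => hx' hx.le) measure_empty
    · exact measure_mono_null (fun x ⟨(hx : 0 ≤ ℓ x), (hx' : ¬ 0 < ℓ x)⟩ =>
        le_antisymm (not_lt.mp hx') hx) hker
  have hcompl : ∫ x in {x | 0 ≤ ℓ x}ᶜ, f x ∂μ = ∫ x in {x | 0 ≤ ℓ x}, f x ∂μ := by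
    rw [← (Measure.measurePreserving_neg μ).setIntegral_preimage_emb
      (Homeomorph.neg E).measurableEmbedding, ← setIntegral_congr_set hpos]
    simp [heven, compl_ofPred]
  have htotal := integral_add_compl hS hf
  rw [hcompl] at htotal
  rw [← htotal, ← two_smul ℝ, smul_smul]
  norm_num

end HalfSpace

theorem setIntegral_upperHalfPlane_fun_norm {f : ℝ → ℝ}
    (hf : IntegrableOn (fun r => r * f r) (Ioi 0)) :
    ∫ y in {y : EuclideanSpace ℝ (Fin 2) | 0 ≤ y 1}, f ‖y‖ = π * ∫ r in Ioi 0, r * f r := by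
  have hℓ : EuclideanSpace.proj (𝕜 := ℝ) (1 : Fin 2) ≠ 0 := fun h => by
    simpa using congr($h (EuclideanSpace.single 1 1))
  have hint : Integrable (fun y : EuclideanSpace ℝ (Fin 2) => f ‖y‖) := by
    rw [integrable_fun_norm_addHaar]
    simpa using hf
  refine (setIntegral_halfSpace_of_even hℓ hint (by simp)).trans ?_
  rw [integral_fun_norm_addHaar]
  simp [Measure.real, pi_nonneg]

theorem integrableOn_pow_mul_exp_neg_mul_sq (n : ℕ) {b : ℝ} (hb : 0 < b) :
    IntegrableOn (fun r : ℝ => r ^ n * exp (-b * r ^ 2)) (Ioi 0) := by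
  simpa [rpow_natCast] using
    integrableOn_rpow_mul_exp_neg_mul_sq hb (s := n) (by linarith [n.cast_nonneg (α := ℝ)])

theorem integral_Ioi_pow_mul_exp_neg_mul_sq (n : ℕ) {b : ℝ} (hb : 0 < b) :
    ∫ r in Ioi 0, r ^ (2 * n + 1) * exp (-b * r ^ 2) = n ! / (2 * b ^ (n + 1)) := by
  have h := integral_rpow_mul_exp_neg_mul_rpow two_pos
    (by norm_cast; omega : (-1 : ℝ) < (2 * n + 1 : ℕ)) hb
  simp only [rpow_natCast, rpow_two] at h
  rw [h, show (((2 * n + 1 : ℕ) : ℝ) + 1) / 2 = n + 1 by push_cast; ring,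
    show -(((2 * n + 1 : ℕ) : ℝ) + 1) / 2 = -((n + 1 : ℕ) : ℝ) by push_cast; ring,
    rpow_neg hb.le, rpow_natCast, Gamma_nat_eq_factorial]
  field_simp

theorem integrableOn_mul_gaussian (K : ℝ) {b : ℝ} (hb : 0 < b) :
    IntegrableOn (fun r => r * (K * exp (-b * r ^ 2))) (Ioi 0) :=
  IntegrableOn.congr_fun ((integrableOn_pow_mul_exp_neg_mul_sq 1 hb).const_mul K)
    (fun r _ => by ring) measurableSet_Ioi

theorem integral_Ioi_mul_gaussian (K : ℝ) {b : ℝ} (hb : 0 < b) :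
    ∫ r in Ioi 0, r * (K * exp (-b * r ^ 2)) = K / (2 * b) := by
  have h := integral_Ioi_pow_mul_exp_neg_mul_sq 0 hb
  simp only [mul_zero, zero_add, pow_one, Nat.factorial_zero, Nat.cast_one] at h
  simp_rw [mul_left_comm _ K]
  rw [integral_const_mul, h]
  ring

theorem mul_gaussian_mul_log {K : ℝ} (hK : K ≠ 0) (b r : ℝ) :
    r * (K * exp (-b * r ^ 2) * log (K * exp (-b * r ^ 2))) =
      K * log K * (r ^ 1 * exp (-b * r ^ 2)) - K * b * (r ^ 3 * exp (-b * r ^ 2)) := by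
  rw [log_mul hK (exp_ne_zero _), log_exp]
  ring

theorem integrableOn_mul_gaussian_mul_log {K : ℝ} (hK : K ≠ 0) {b : ℝ} (hb : 0 < b) :
    IntegrableOn (fun r => r * (K * exp (-b * r ^ 2) * log (K * exp (-b * r ^ 2)))) (Ioi 0) := by
  simp_rw [mul_gaussian_mul_log hK]
  exact ((integrableOn_pow_mul_exp_neg_mul_sq 1 hb).const_mul _).sub
    ((integrableOn_pow_mul_exp_neg_mul_sq 3 hb).const_mul _)

theorem integral_Ioi_mul_gaussian_mul_log {K : ℝ} (hK : K ≠ 0) {b : ℝ} (hb : 0 < b) :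
    ∫ r in Ioi 0, r * (K * exp (-b * r ^ 2) * log (K * exp (-b * r ^ 2))) =
      K / (2 * b) * (log K - 1) := by
  simp_rw [mul_gaussian_mul_log hK]
  rw [integral_sub ((integrableOn_pow_mul_exp_neg_mul_sq 1 hb).const_mul _)
      ((integrableOn_pow_mul_exp_neg_mul_sq 3 hb).const_mul _),
    integral_const_mul, integral_const_mul, integral_Ioi_pow_mul_exp_neg_mul_sq 0 hb,
    integral_Ioi_pow_mul_exp_neg_mul_sq 1 hb]
  field_simp
  ring

theorem integral_Ioc_one_div_sqrt_mul {c t : ℝ} (hc : 0 < c) (ht : 0 ≤ t) :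
    ∫ s in Ioc 0 t, 1 / √(c * s) = 2 * √t / √c := by
  have hpow : ∀ s ∈ Ioc 0 t, 1 / √(c * s) = (√c)⁻¹ * s ^ (-(1 : ℝ) / 2) := fun s hs => by
    rw [sqrt_mul hc.le, neg_div, rpow_neg hs.1.le, ← sqrt_eq_rpow, one_div, mul_inv]
  rw [setIntegral_congr_fun measurableSet_Ioc hpow, integral_const_mul,
    ← intervalIntegral.integral_of_le ht, integral_rpow (by norm_num),
    show -(1 : ℝ) / 2 + 1 = 1 / 2 by norm_num, zero_rpow (by norm_num), sub_zero,
    ← sqrt_eq_rpow]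
  field_simp

/-- **Heat kernel at a boundary point of the upper half-plane.** On
`H = {y ∈ ℝ² : y₂ ≥ 0}` with 2-dimensional Lebesgue measure, the reflected heat kernel
`q_t(y) = (2πt)⁻¹ exp(-|y|²/(4t))` at the corner point is a probability density with
entropy `log 2 - log(4πe t)`; consequently, with `U(s) = √(2πe s)`,
`(1/√t) ∫₀ᵗ ds/U(s) = √(2/(πe))`. -/
theorem upper_half_plane_heat_kernel (t : ℝ) (ht : 0 < t)
    (H : Set (EuclideanSpace ℝ (Fin 2))) (hH : H = {y | 0 ≤ y 1})
    (q : EuclideanSpace ℝ (Fin 2) → ℝ)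
    (hq : q = fun y => (2 * π * t)⁻¹ * Real.exp (-‖y‖ ^ 2 / (4 * t))) :
    (∫ y in H, q y = 1) ∧
    (∫ y in H, q y * Real.log (q y) =
        Real.log 2 - Real.log (4 * π * Real.exp 1 * t)) ∧
    ((1 / Real.sqrt t) * ∫ s in Ioc (0 : ℝ) t, 1 / Real.sqrt (2 * π * Real.exp 1 * s) =
        Real.sqrt (2 / (π * Real.exp 1))) := by
  subst hH hq
  set K := (2 * π * t)⁻¹ with hK
  set b := (4 * t)⁻¹ with hb
  have hK0 : K ≠ 0 := by positivity
  have hb0 : 0 < b := by positivity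
  have hmass : π * (K / (2 * b)) = 1 := by
    rw [hK, hb]
    field_simp
    norm_num
  have hentropy : log K - 1 = log 2 - log (4 * π * exp 1 * t) := by
    rw [hK, log_inv, show 4 * π * exp 1 * t = 2 * exp 1 * (2 * π * t) by ring,
      log_mul (x := 2 * exp 1) (by positivity) (by positivity),
      log_mul two_ne_zero (exp_ne_zero 1), log_exp]
    ring
  simp_rw [show ∀ r : ℝ, -r ^ 2 / (4 * t) = -b * r ^ 2 from fun r => by rw [hb]; ring]
  refine ⟨?_, ?_, ?_⟩
  · rw [setIntegral_upperHalfPlane_fun_norm (f := fun r => K * exp (-b * r ^ 2))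
      (integrableOn_mul_gaussian K hb0), integral_Ioi_mul_gaussian K hb0, hmass]
  · rw [setIntegral_upperHalfPlane_fun_norm
      (f := fun r => K * exp (-b * r ^ 2) * log (K * exp (-b * r ^ 2)))
      (integrableOn_mul_gaussian_mul_log hK0 hb0), integral_Ioi_mul_gaussian_mul_log hK0 hb0,
      ← mul_assoc, hmass, one_mul, hentropy]
  · rw [integral_Ioc_one_div_sqrt_mul (by positivity) ht.le,
      show 2 * π * exp 1 = 2 * (π * exp 1) by ring, sqrt_mul zero_le_two, sqrt_div zero_le_two]
    field_simp
    rw [sq_sqrt zero_le_two]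
end
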